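/- Let E be a closed discrete subset of ℂ² contained in the complex line ℂ × {0}. Then there exists an injective holomorphic map F : ℂ² → ℂ² whose image is disjoint from E. (Consequently, the complement of any tame closed discrete set in ℂ² admits an injective holomorphic map from ℂ², and in particular is dominable by ℂ².) -/

import Mathlib

/-!
`ψ = expandingMap` is an injective entire self-map of `ℂ²` (the inverse of an automorphism) with
fixed point `p = (0, 1)`, derivative `2 • id` there, and which maps the complement of the line
`w = 0` into itself. Its Poincaré function `F x = lim ψ^[n] (p + 2⁻ⁿ • x)` solves
`F x = ψ^[n] (F (2⁻ⁿ • x))` and `F y = p + y + O(‖y‖²)`; these two facts make `F` entire and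
injective. If `F x` lay on the line, so would every `F (2⁻ⁿ • x)`; but these tend to `F 0 = p`,
which does not. So the image of `F` misses the whole line, and in particular `E`.
-/

open Complex Filter Metric Set Topology

section CauchyEstimate

variable {E F : Type*} [NormedAddCommGroup E] [NormedSpace ℂ E]
  [NormedAddCommGroup F] [NormedSpace ℂ F]

theorem norm_fderiv_le_of_forall_norm_le {h : E → F} {c : E} {r B : ℝ}
    (hd : DifferentiableOn ℂ h (ball c r)) (hr : 0 < r) (hB : ∀ z ∈ ball c r, ‖h z‖ ≤ B) :
    ‖fderiv ℂ h c‖ ≤ 2 * B / r := by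
  refine norm_fderiv_le_div_of_mapsTo_ball hd (fun z hz => ?_) hr
  rw [mem_closedBall, dist_eq_norm]
  calc ‖h z - h c‖ ≤ ‖h z‖ + ‖h c‖ := norm_sub_le _ _
    _ ≤ 2 * B := by linarith [hB z hz, hB c (mem_ball_self hr)]

theorem norm_sub_le_of_forall_norm_le {h : E → F} {c : E} {r B : ℝ}
    (hd : Differentiable ℂ h) (hr : 0 < r) (hB : ∀ z, ‖z - c‖ ≤ 2 * r → ‖h z‖ ≤ B)
    {x y : E} (hx : ‖x - c‖ ≤ r) (hy : ‖y - c‖ ≤ r) :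
    ‖h x - h y‖ ≤ 2 * B / r * ‖x - y‖ := by
  have hderiv : ∀ q ∈ closedBall c r, ‖fderiv ℂ h q‖ ≤ 2 * B / r := by
    intro q hq
    refine norm_fderiv_le_of_forall_norm_le hd.differentiableOn hr fun z hz => hB z ?_
    rw [mem_closedBall, dist_eq_norm] at hq
    rw [mem_ball, dist_eq_norm] at hz
    calc ‖z - c‖ = ‖(z - q) + (q - c)‖ := by rw [sub_add_sub_cancel]
      _ ≤ ‖z - q‖ + ‖q - c‖ := norm_add_le _ _
      _ ≤ 2 * r := by linarith
  exact (convex_closedBall c r).norm_image_sub_le_of_norm_fderiv_le (fun q _ => hd q) hderiv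
    (by rwa [mem_closedBall, dist_eq_norm]) (by rwa [mem_closedBall, dist_eq_norm])

end CauchyEstimate

theorem tendstoUniformlyOn_of_dist_le_geometric_two {α β : Type*} [PseudoMetricSpace α]
    {f : ℕ → β → α} {g : β → α} {s : Set β} {C : ℝ}
    (hf : ∀ x ∈ s, ∀ n, dist (f n x) (f (n + 1) x) ≤ C / 2 / 2 ^ n)
    (hg : ∀ x ∈ s, Tendsto (f · x) atTop (𝓝 (g x))) :
    TendstoUniformlyOn f g atTop s := by
  refine Metric.tendstoUniformlyOn_iff.2 fun ε hε => ?_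
  have hC : Tendsto (fun n : ℕ => C / 2 ^ n) atTop (𝓝 0) :=
    tendsto_const_nhds.div_atTop (tendsto_pow_atTop_atTop_of_one_lt one_lt_two)
  filter_upwards [hC.eventually (gt_mem_nhds hε)] with n hn x hx
  rw [dist_comm]
  exact (dist_le_of_le_geometric_two_of_tendsto (hf x hx) (hg x hx) n).trans_lt hn

section Poincare

variable {E : Type*} [NormedAddCommGroup E] [NormedSpace ℂ E]

/-- `ψ (p + η) = p + 2 • η + O(‖η‖²)`, with the constants that `expandingMap` satisfies at
`(0, 1)`. -/
def IsDoublingAt (ψ : E → E) (p : E) : Prop :=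
  ∀ y, ‖y - p‖ ≤ 1 / 4 → ‖ψ y - p - (2 : ℂ) • (y - p)‖ ≤ 32 * ‖y - p‖ ^ 2

noncomputable def poincareApprox (ψ : E → E) (p : E) (n : ℕ) (x : E) : E :=
  ψ^[n] (p + (2 ^ n : ℂ)⁻¹ • x)

noncomputable def poincareMap (ψ : E → E) (p : E) (x : E) : E :=
  limUnder atTop fun n => poincareApprox ψ p n x

variable {ψ : E → E} {p : E}

theorem norm_inv_two_pow_smul (n : ℕ) (x : E) : ‖(2 ^ n : ℂ)⁻¹ • x‖ = ‖x‖ / 2 ^ n := by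
  rw [norm_smul, norm_inv, norm_pow, Complex.norm_ofNat, inv_mul_eq_div]

theorem tendsto_inv_two_pow_smul (x : E) :
    Tendsto (fun n : ℕ => (2 ^ n : ℂ)⁻¹ • x) atTop (𝓝 0) := by
  have h : Tendsto (fun n : ℕ => (2⁻¹ : ℂ) ^ n) atTop (𝓝 0) :=
    tendsto_pow_atTop_nhds_zero_of_norm_lt_one (by norm_num)
  simpa [inv_pow] using h.smul_const x

theorem eventually_norm_inv_two_pow_smul_lt (x : E) {c : ℝ} (hc : 0 < c) :
    ∀ᶠ n : ℕ in atTop, ‖(2 ^ n : ℂ)⁻¹ • x‖ < c := by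
  simpa using (tendsto_inv_two_pow_smul x).eventually (ball_mem_nhds 0 hc)

theorem differentiable_poincareApprox (hψ : Differentiable ℂ ψ) (n : ℕ) :
    Differentiable ℂ (poincareApprox ψ p n) :=
  (hψ.iterate n).comp ((differentiable_id.const_smul _).const_add p)

theorem poincareApprox_add (N n : ℕ) (x : E) :
    poincareApprox ψ p (n + N) x = ψ^[N] (poincareApprox ψ p n ((2 ^ N : ℂ)⁻¹ • x)) := by
  rw [poincareApprox, poincareApprox, smul_smul, ← mul_inv, ← pow_add,
    ← Function.iterate_add_apply, add_comm N n]

namespace IsDoublingAt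

theorem apply_self (h : IsDoublingAt ψ p) : ψ p = p := by
  simpa [sub_eq_zero] using h p (by simp)

theorem poincareApprox_zero (h : IsDoublingAt ψ p) (n : ℕ) : poincareApprox ψ p n 0 = p := by
  rw [poincareApprox, smul_zero, add_zero, Function.iterate_fixed h.apply_self]

theorem norm_sub_sub_le (h : IsDoublingAt ψ p) (hψ : Differentiable ℂ ψ) {r : ℝ}
    (hr : 0 < r) (hr8 : r ≤ 1 / 8) {y y' : E} (hy : ‖y - p‖ ≤ r) (hy' : ‖y' - p‖ ≤ r) :
    ‖ψ y - ψ y' - (2 : ℂ) • (y - y')‖ ≤ 256 * r * ‖y - y'‖ := by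
  have hB : ∀ z, ‖z - p‖ ≤ 2 * r → ‖ψ z - p - (2 : ℂ) • (z - p)‖ ≤ 128 * r ^ 2 := by
    intro z hz
    calc ‖ψ z - p - (2 : ℂ) • (z - p)‖ ≤ 32 * ‖z - p‖ ^ 2 := h z (by linarith)
      _ ≤ 32 * (2 * r) ^ 2 := by gcongr
      _ = 128 * r ^ 2 := by ring
  have hd : Differentiable ℂ fun z => ψ z - p - (2 : ℂ) • (z - p) := by fun_prop
  have := norm_sub_le_of_forall_norm_le hd hr hB hy hy'
  rw [show 2 * (128 * r ^ 2) / r = 256 * r by field_simp; ring] at this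
  convert this using 2
  module

theorem norm_apply_sub_apply_le (h : IsDoublingAt ψ p) (hψ : Differentiable ℂ ψ) {r : ℝ}
    (hr : 0 < r) (hr8 : r ≤ 1 / 8) {y y' : E} (hy : ‖y - p‖ ≤ r) (hy' : ‖y' - p‖ ≤ r) :
    ‖ψ y - ψ y'‖ ≤ (2 + 256 * r) * ‖y - y'‖ := by
  calc ‖ψ y - ψ y'‖ = ‖(ψ y - ψ y' - (2 : ℂ) • (y - y')) + (2 : ℂ) • (y - y')‖ := by
        rw [sub_add_cancel]
    _ ≤ 256 * r * ‖y - y'‖ + 2 * ‖y - y'‖ := by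
        grw [norm_add_le, h.norm_sub_sub_le hψ hr hr8 hy hy', norm_smul, Complex.norm_ofNat]
    _ = (2 + 256 * r) * ‖y - y'‖ := by ring

theorem norm_iterate_sub_iterate_le (h : IsDoublingAt ψ p) (hψ : Differentiable ℂ ψ)
    {m k : ℕ} (hk : k ≤ m) {y y' : E} (hy : 512 * 2 ^ m * ‖y - p‖ ≤ 1)
    (hy' : 512 * 2 ^ m * ‖y' - p‖ ≤ 1) :
    ‖ψ^[k] y - ψ^[k] y'‖ ≤ 2 ^ k * (1 + 2 ^ k / 2 ^ m) * ‖y - y'‖ := by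
  induction k generalizing y y' with
  | zero =>
    simp only [Function.iterate_zero, id, pow_zero, one_mul]
    exact le_mul_of_one_le_left (norm_nonneg _) (le_add_of_nonneg_right (by positivity))
  | succ k ih =>
    set a : ℝ := 2 ^ k / 2 ^ m with ha
    have hkm : k < m := hk
    have ha0 : 0 < a := by positivity
    have ha1 : 2 * a ≤ 1 := by
      rw [ha, ← mul_div_assoc, ← pow_succ', div_le_one (by positivity)]
      exact pow_le_pow_right₀ one_le_two hkm
    have hsucc : (2 : ℝ) ^ (k + 1) / 2 ^ m = 2 * a := by rw [ha, pow_succ]; ring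
    -- The case `y' = p` keeps both orbits in the ball of radius `a / 256` around the fixed
    -- point, where `ψ` is `(2 + a)`-Lipschitz.
    have horbit : ∀ {z : E}, 512 * 2 ^ m * ‖z - p‖ ≤ 1 → ‖ψ^[k] z - p‖ ≤ a / 256 := by
      intro z hz
      have := ih hkm.le (y' := p) hz (by simp)
      rw [Function.iterate_fixed h.apply_self] at this
      have ham : a * 2 ^ m = 2 ^ k := div_mul_cancel₀ _ (by positivity)
      have h512 : 512 * (2 ^ k * ‖z - p‖) ≤ a := by
        rw [← ham]; nlinarith [mul_le_mul_of_nonneg_left hz ha0.le]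
      nlinarith [mul_le_mul_of_nonneg_left ha1 (by positivity : (0:ℝ) ≤ 2 ^ k * ‖z - p‖)]
    have hlip := h.norm_apply_sub_apply_le hψ (r := a / 256) (by positivity) (by linarith)
      (horbit hy) (horbit hy')
    rw [Function.iterate_succ_apply', Function.iterate_succ_apply', hsucc]
    calc ‖ψ (ψ^[k] y) - ψ (ψ^[k] y')‖ ≤ (2 + a) * ‖ψ^[k] y - ψ^[k] y'‖ := by
          convert hlip using 2; ring
      _ ≤ (2 + a) * (2 ^ k * (1 + a) * ‖y - y'‖) := by gcongr; exact ih hkm.le hy hy'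
      _ ≤ 2 ^ (k + 1) * (1 + 2 * a) * ‖y - y'‖ := by
          rw [pow_succ]
          have : 0 ≤ 2 ^ k * ‖y - y'‖ * (a * (1 - a)) :=
            mul_nonneg (by positivity) (mul_nonneg ha0.le (by linarith))
          nlinarith

theorem dist_poincareApprox_succ_le (h : IsDoublingAt ψ p) (hψ : Differentiable ℂ ψ)
    {x : E} (hx : ‖x‖ ≤ 1 / 1024) (n : ℕ) :
    dist (poincareApprox ψ p n x) (poincareApprox ψ p (n + 1) x) ≤ 32 * ‖x‖ ^ 2 / 2 / 2 ^ n := by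
  set u : E := (2 ^ (n + 1) : ℂ)⁻¹ • x
  set w : E := (2 ^ n : ℂ)⁻¹ • x
  have h2n : (0 : ℝ) < 2 ^ n := by positivity
  have hu : ‖u‖ = ‖x‖ / (2 * 2 ^ n) := by rw [norm_inv_two_pow_smul, pow_succ, mul_comm]
  have hw : ‖w‖ = ‖x‖ / 2 ^ n := norm_inv_two_pow_smul n x
  have hwu : w = (2 : ℂ) • u := by
    rw [smul_smul, pow_succ, show (2 : ℂ) * (2 ^ n * 2)⁻¹ = (2 ^ n)⁻¹ by field_simp]
  obtain ⟨e, he, hψu⟩ : ∃ e : E, 2 ^ n * (2 ^ n * ‖e‖) ≤ 8 * ‖x‖ ^ 2 ∧ ψ (p + u) = p + w + e := by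
    refine ⟨ψ (p + u) - p - (2 : ℂ) • u, ?_, by rw [hwu]; abel⟩
    have hu4 : ‖u‖ ≤ 1 / 4 := by
      rw [hu, div_le_iff₀ (by positivity)]; nlinarith [one_le_pow₀ (M₀ := ℝ) one_le_two (n := n)]
    have := h (p + u) (by rwa [add_sub_cancel_left])
    rw [add_sub_cancel_left, hu] at this
    calc 2 ^ n * (2 ^ n * ‖ψ (p + u) - p - (2 : ℂ) • u‖)
        ≤ 2 ^ n * (2 ^ n * (32 * (‖x‖ / (2 * 2 ^ n)) ^ 2)) := by gcongr
      _ = 8 * ‖x‖ ^ 2 := by field_simp; ring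
  have hx' : 512 * 2 ^ n * ‖p + w - p‖ ≤ 1 := by
    rw [add_sub_cancel_left, hw]; field_simp; linarith
  have hxe : 512 * 2 ^ n * ‖p + w + e - p‖ ≤ 1 := by
    rw [add_assoc, add_sub_cancel_left]
    have he' : 2 ^ n * ‖e‖ ≤ 8 * ‖x‖ ^ 2 := by
      nlinarith [one_le_pow₀ (M₀ := ℝ) one_le_two (n := n), norm_nonneg e]
    calc 512 * 2 ^ n * ‖w + e‖ ≤ 512 * (2 ^ n * ‖w‖) + 512 * (2 ^ n * ‖e‖) := by
          grw [norm_add_le]; ring_nf; rfl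
      _ ≤ 1 := by
          rw [hw, mul_div_cancel₀ _ h2n.ne']
          nlinarith [mul_le_mul_of_nonneg_left hx (norm_nonneg x)]
  have hiter := h.norm_iterate_sub_iterate_le hψ le_rfl hxe hx'
  rw [div_self h2n.ne', add_sub_cancel_left] at hiter
  rw [dist_comm, dist_eq_norm, poincareApprox, Function.iterate_succ_apply, hψu]
  calc ‖ψ^[n] (p + w + e) - ψ^[n] (p + w)‖ ≤ 2 ^ n * (1 + 1) * ‖e‖ := hiter
    _ ≤ 32 * ‖x‖ ^ 2 / 2 / 2 ^ n := by rw [le_div_iff₀ h2n]; nlinarith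

theorem dist_fderiv_poincareApprox_succ_le (h : IsDoublingAt ψ p) (hψ : Differentiable ℂ ψ)
    {x : E} (hx : ‖x‖ < 1 / 2048) (n : ℕ) :
    dist (fderiv ℂ (poincareApprox ψ p n) x) (fderiv ℂ (poincareApprox ψ p (n + 1)) x)
      ≤ 1 / 8 / 2 / 2 ^ n := by
  have hd : Differentiable ℂ (poincareApprox ψ p (n + 1) - poincareApprox ψ p n) :=
    (differentiable_poincareApprox hψ _).sub (differentiable_poincareApprox hψ _)
  have hB : ∀ z ∈ ball x (1 / 2048),
      ‖(poincareApprox ψ p (n + 1) - poincareApprox ψ p n) z‖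
        ≤ 32 * (1 / 1024) ^ 2 / 2 / 2 ^ n := by
    intro z hz
    have hz' : ‖z‖ ≤ 1 / 1024 := by
      have := norm_le_norm_add_norm_sub' z x
      rw [mem_ball, dist_eq_norm] at hz
      linarith
    rw [Pi.sub_apply, ← dist_eq_norm, dist_comm]
    refine (h.dist_poincareApprox_succ_le hψ hz' n).trans ?_
    gcongr
  have := norm_fderiv_le_of_forall_norm_le hd.differentiableOn (by norm_num) hB
  rw [fderiv_sub (differentiable_poincareApprox hψ _ x)
    (differentiable_poincareApprox hψ _ x)] at this
  rw [dist_comm, dist_eq_norm]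
  exact this.trans_eq (by ring)

variable [CompleteSpace E]

theorem tendsto_poincareApprox (h : IsDoublingAt ψ p) (hψ : Differentiable ℂ ψ) (x : E) :
    Tendsto (fun n => poincareApprox ψ p n x) atTop (𝓝 (poincareMap ψ p x)) := by
  obtain ⟨N, hN⟩ := (eventually_norm_inv_two_pow_smul_lt x (c := 1 / 1024) (by norm_num)).exists
  obtain ⟨ℓ, hℓ⟩ := cauchySeq_tendsto_of_complete
    (cauchySeq_of_le_geometric_two (h.dist_poincareApprox_succ_le hψ hN.le))
  refine tendsto_nhds_limUnder ⟨ψ^[N] ℓ, (tendsto_add_atTop_iff_nat N).1 ?_⟩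
  simp_rw [poincareApprox_add]
  exact ((hψ.iterate N).continuous.tendsto ℓ).comp hℓ

theorem poincareMap_eq_iterate (h : IsDoublingAt ψ p) (hψ : Differentiable ℂ ψ) (N : ℕ)
    (x : E) : poincareMap ψ p x = ψ^[N] (poincareMap ψ p ((2 ^ N : ℂ)⁻¹ • x)) := by
  refine tendsto_nhds_unique ((tendsto_add_atTop_iff_nat N).2 (h.tendsto_poincareApprox hψ x)) ?_
  simp_rw [poincareApprox_add]
  exact ((hψ.iterate N).continuous.tendsto _).comp (h.tendsto_poincareApprox hψ _)

theorem poincareMap_zero (h : IsDoublingAt ψ p) (hψ : Differentiable ℂ ψ) :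
    poincareMap ψ p 0 = p := by
  refine tendsto_nhds_unique (h.tendsto_poincareApprox hψ 0) ?_
  simp_rw [h.poincareApprox_zero]
  exact tendsto_const_nhds

theorem dist_poincareMap_le (h : IsDoublingAt ψ p) (hψ : Differentiable ℂ ψ) {x : E}
    (hx : ‖x‖ ≤ 1 / 1024) : dist (p + x) (poincareMap ψ p x) ≤ 32 * ‖x‖ ^ 2 := by
  simpa [poincareApprox] using dist_le_of_le_geometric_two_of_tendsto₀
    (h.dist_poincareApprox_succ_le hψ hx) (h.tendsto_poincareApprox hψ x)

theorem injective_poincareMap (h : IsDoublingAt ψ p) (hψ : Differentiable ℂ ψ)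
    (hinj : Function.Injective ψ) : Function.Injective (poincareMap ψ p) := by
  intro x y hxy
  suffices ‖x - y‖ ≤ 0 by rwa [norm_le_zero_iff, sub_eq_zero] at this
  have hlim : Tendsto (fun n : ℕ => 32 * (‖x‖ ^ 2 + ‖y‖ ^ 2) / 2 ^ n) atTop (𝓝 0) :=
    tendsto_const_nhds.div_atTop (tendsto_pow_atTop_atTop_of_one_lt one_lt_two)
  refine ge_of_tendsto hlim ?_
  filter_upwards [eventually_norm_inv_two_pow_smul_lt x (c := 1 / 1024) (by norm_num),
    eventually_norm_inv_two_pow_smul_lt y (c := 1 / 1024) (by norm_num)] with n hx hy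
  set u : E := (2 ^ n : ℂ)⁻¹ • x
  set v : E := (2 ^ n : ℂ)⁻¹ • y
  have huv : poincareMap ψ p u = poincareMap ψ p v := by
    refine hinj.iterate n ?_
    rwa [← h.poincareMap_eq_iterate hψ, ← h.poincareMap_eq_iterate hψ]
  have hdist : ‖u - v‖ ≤ 32 * ‖u‖ ^ 2 + 32 * ‖v‖ ^ 2 := by
    calc ‖u - v‖ = dist (p + u) (p + v) := by rw [dist_eq_norm, add_sub_add_left_eq_sub]
      _ ≤ dist (p + u) (poincareMap ψ p u) + dist (p + v) (poincareMap ψ p v) := by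
          rw [huv]; exact dist_triangle_right _ _ _
      _ ≤ 32 * ‖u‖ ^ 2 + 32 * ‖v‖ ^ 2 :=
          add_le_add (h.dist_poincareMap_le hψ hx.le) (h.dist_poincareMap_le hψ hy.le)
  rw [← smul_sub, norm_inv_two_pow_smul, norm_inv_two_pow_smul, norm_inv_two_pow_smul] at hdist
  have h2n : (0 : ℝ) < 2 ^ n := by positivity
  rw [le_div_iff₀ h2n]
  field_simp at hdist
  nlinarith

theorem differentiableAt_poincareMap_of_norm_lt (h : IsDoublingAt ψ p)
    (hψ : Differentiable ℂ ψ) {x : E} (hx : ‖x‖ < 1 / 2048) :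
    DifferentiableAt ℂ (poincareMap ψ p) x := by
  have hgeom : ∀ y ∈ ball (0 : E) (1 / 2048), ∀ n,
      dist (fderiv ℂ (poincareApprox ψ p n) y) (fderiv ℂ (poincareApprox ψ p (n + 1)) y)
        ≤ 1 / 8 / 2 / 2 ^ n := fun y hy =>
    h.dist_fderiv_poincareApprox_succ_le hψ (by rwa [mem_ball_zero_iff] at hy)
  have hG : ∀ y ∈ ball (0 : E) (1 / 2048), Tendsto (fun n => fderiv ℂ (poincareApprox ψ p n) y)
      atTop (𝓝 (limUnder atTop fun n => fderiv ℂ (poincareApprox ψ p n) y)) :=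
    fun y hy => (cauchySeq_of_le_geometric_two (hgeom y hy)).tendsto_limUnder
  exact (hasFDerivAt_of_tendstoUniformlyOn isOpen_ball
    (tendstoUniformlyOn_of_dist_le_geometric_two hgeom hG)
    (fun n y _ => (differentiable_poincareApprox hψ n y).hasFDerivAt)
    (fun y _ => h.tendsto_poincareApprox hψ y) (by rwa [mem_ball_zero_iff])).differentiableAt

theorem differentiable_poincareMap (h : IsDoublingAt ψ p) (hψ : Differentiable ℂ ψ) :
    Differentiable ℂ (poincareMap ψ p) := by
  intro x
  obtain ⟨N, hN⟩ := (eventually_norm_inv_two_pow_smul_lt x (c := 1 / 2048) (by norm_num)).exists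
  rw [funext (h.poincareMap_eq_iterate hψ N)]
  exact (hψ.iterate N _).comp x
    ((h.differentiableAt_poincareMap_of_norm_lt hψ hN).comp x (differentiableAt_id.const_smul _))

theorem poincareMap_notMem (h : IsDoublingAt ψ p) (hψ : Differentiable ℂ ψ) {S : Set E}
    (hS : IsClosed S) (hψS : MapsTo ψ Sᶜ Sᶜ) (hp : p ∉ S) (x : E) : poincareMap ψ p x ∉ S := by
  intro hx
  have hmem : ∀ n : ℕ, poincareMap ψ p ((2 ^ n : ℂ)⁻¹ • x) ∈ S := fun n => by
    by_contra hn
    exact hψS.iterate n hn (h.poincareMap_eq_iterate hψ n x ▸ hx)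
  have hlim := ((h.differentiable_poincareMap hψ).continuous.tendsto 0).comp
    (tendsto_inv_two_pow_smul x)
  rw [h.poincareMap_zero hψ] at hlim
  exact hp (hS.mem_of_tendsto hlim (Eventually.of_forall hmem))

end IsDoublingAt

end Poincare

noncomputable def expandingMap (q : ℂ × ℂ) : ℂ × ℂ :=
  (4 * q.1 - 4 * q.2 + 2 + 2 * q.2 * exp (q.2 - q.1 - 1),
    q.2 * exp (q.1 - q.2 + q.2 * exp (q.2 - q.1 - 1)))

theorem differentiable_expandingMap : Differentiable ℂ expandingMap :=
  Differentiable.prodMk (by fun_prop) (by fun_prop)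

theorem injective_expandingMap : Function.Injective expandingMap := by
  rintro ⟨u, v⟩ ⟨u', v'⟩ h
  simp only [expandingMap, Prod.mk.injEq] at h
  obtain ⟨h1, h2⟩ := h
  -- With `c = v * exp (v - u - 1)`, the first coordinate is `4 (u - v) + 2 + 2 c` and the second
  -- is `c * exp (first / 2)`; so `c`, then `v - u`, then `v` are determined by the image.
  have key : v * exp (v - u - 1) = v' * exp (v' - u' - 1) := by
    have e2 : v * exp (v - u - 1) * exp (2 * u - 2 * v + 1 + v * exp (v - u - 1))
        = v' * exp (v' - u' - 1) * exp (2 * u' - 2 * v' + 1 + v' * exp (v' - u' - 1)) := by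
      rw [mul_assoc, mul_assoc, ← Complex.exp_add, ← Complex.exp_add]
      convert h2 using 2 <;> ring_nf
    have e3 : 2 * u - 2 * v + 1 + v * exp (v - u - 1)
        = 2 * u' - 2 * v' + 1 + v' * exp (v' - u' - 1) := by linear_combination h1 / 2
    rw [e3] at e2
    exact mul_right_cancel₀ (exp_ne_zero _) e2
  have huv : v - u - 1 = v' - u' - 1 := by linear_combination (2 * key - h1) / 4
  have hv : v = v' := by
    rw [huv] at key
    exact mul_right_cancel₀ (exp_ne_zero _) key
  have hu : u = u' := by linear_combination hv - huv
  rw [hu, hv]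

theorem mapsTo_expandingMap :
    MapsTo expandingMap {q | q.2 = 0}ᶜ {q | q.2 = 0}ᶜ := fun q hq => by
  simpa [expandingMap, exp_ne_zero] using hq

theorem isDoublingAt_expandingMap : IsDoublingAt expandingMap (0, 1) := by
  rintro ⟨s, w⟩ hy
  obtain ⟨t, rfl⟩ : ∃ t, w = 1 + t := ⟨w - 1, by ring⟩
  have hst : ((s, 1 + t) : ℂ × ℂ) - (0, 1) = (s, t) := by ext <;> simp
  rw [hst] at hy ⊢
  set r := ‖((s, t) : ℂ × ℂ)‖
  have hr : 0 ≤ r := norm_nonneg _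
  have hs : ‖s‖ ≤ r := norm_fst_le ((s, t) : ℂ × ℂ)
  have ht : ‖t‖ ≤ r := norm_snd_le ((s, t) : ℂ × ℂ)
  set δ := t - s
  set ρ := exp δ - 1 - δ
  set σ := t * δ + (1 + t) * ρ
  have hδ : ‖δ‖ ≤ 2 * r := (norm_sub_le t s).trans (by linarith)
  have hρ : ‖ρ‖ ≤ 4 * r ^ 2 :=
    (norm_exp_sub_one_sub_id_le (by linarith)).trans (by nlinarith [norm_nonneg δ])
  have h1t : ‖1 + t‖ ≤ 5 / 4 := (norm_add_le 1 t).trans (by rw [norm_one]; linarith)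
  have hσ : ‖σ‖ ≤ 7 * r ^ 2 := by
    calc ‖σ‖ ≤ ‖t‖ * ‖δ‖ + ‖1 + t‖ * ‖ρ‖ := by grw [norm_add_le, norm_mul, norm_mul]
      _ ≤ r * (2 * r) + 5 / 4 * (4 * r ^ 2) := by bound
      _ ≤ 7 * r ^ 2 := by nlinarith
  have htσ : ‖t + σ‖ ≤ 11 / 4 * r := (norm_add_le t σ).trans (by nlinarith)
  have hρ' : ‖exp (t + σ) - 1 - (t + σ)‖ ≤ 8 * r ^ 2 :=
    (norm_exp_sub_one_sub_id_le (by linarith)).trans (by nlinarith [norm_nonneg (t + σ)])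
  have hfst : (expandingMap (s, 1 + t)).1 - 0 - 2 * s = 2 * t * δ + 2 * (1 + t) * ρ := by
    simp only [expandingMap, δ, ρ]; ring_nf
  have hexp : s - (1 + t) + (1 + t) * exp (1 + t - s - 1) = t + σ := by
    simp only [σ, ρ, δ]; ring_nf
  have hsnd : (expandingMap (s, 1 + t)).2 - 1 - 2 * t
      = (1 + t) * (exp (t + σ) - 1 - (t + σ)) + (1 + t) * σ + t ^ 2 := by
    simp only [expandingMap]; rw [hexp]; ring
  rw [norm_prod_le_iff]
  constructor
  · simp only [Prod.fst_sub, Prod.smul_fst, smul_eq_mul, hfst]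
    calc ‖2 * t * δ + 2 * (1 + t) * ρ‖ ≤ ‖2 * t * δ‖ + ‖2 * (1 + t) * ρ‖ := norm_add_le _ _
      _ ≤ 2 * r * (2 * r) + 2 * (5 / 4) * (4 * r ^ 2) := by
          simp only [norm_mul, Complex.norm_ofNat]; bound
      _ ≤ 32 * r ^ 2 := by nlinarith
  · simp only [Prod.snd_sub, Prod.smul_snd, smul_eq_mul, hsnd]
    calc _ ≤ ‖(1 + t) * (exp (t + σ) - 1 - (t + σ))‖ + ‖(1 + t) * σ‖ + ‖t ^ 2‖ :=
          norm_add₃_le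
      _ ≤ 5 / 4 * (8 * r ^ 2) + 5 / 4 * (7 * r ^ 2) + r ^ 2 := by
          simp only [norm_mul, norm_pow]; bound
      _ ≤ 32 * r ^ 2 := by nlinarith

theorem stmt15_general (E : Set (ℂ × ℂ))
    (hEl : E ⊆ {w : ℂ × ℂ | w.2 = 0}) :
    ∃ F : ℂ × ℂ → ℂ × ℂ,
      Differentiable ℂ F ∧ Function.Injective F ∧
      ∀ x : ℂ × ℂ, F x ∉ E := by
  have h := isDoublingAt_expandingMap
  have hψ := differentiable_expandingMap
  refine ⟨poincareMap expandingMap (0, 1), h.differentiable_poincareMap hψ,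
    h.injective_poincareMap hψ injective_expandingMap, fun x hx => ?_⟩
  exact h.poincareMap_notMem hψ (isClosed_eq continuous_snd continuous_const)
    mapsTo_expandingMap (by simp) x (hEl hx)

/-- if E is a closed discrete subset of ℂ² contained in the
complex line ℂ × {0}, then there is an injective holomorphic F : ℂ² → ℂ² whose
image is disjoint from E. -/
theorem stmt15 (E : Set (ℂ × ℂ)) (hEc : IsClosed E) (hEd : DiscreteTopology E)
    (hEl : E ⊆ {w : ℂ × ℂ | w.2 = 0}) :
    ∃ F : ℂ × ℂ → ℂ × ℂ,
      Differentiable ℂ F ∧ Function.Injective F ∧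
      ∀ x : ℂ × ℂ, F x ∉ E :=
  stmt15_general E hEl
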